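/- arXiv:2212.06435 — 7 statements merged into one kernel-verified Lean document; each statement's English description precedes it below -/
import Mathlib

section
/- For every λ > 0 and u > 0, if g_λ(u) = e^{-λu}, then u^β·λ²·∫₀¹ ∫₀¹ e^{-λ(u+z·v)}·(1-v) dv dz + u^θ·∫₁^∞ [e^{-λ(u+z)} - e^{-λu}]·z^{-2} dz ≥ e^{-λu}·[2^{-1}·u^β·λ·(1 - e^{-λ/2}) - u^θ], for any β, θ ≥ 0. -/
open MeasureTheory intervalIntegral Real

/-- Lower bound for the generator of the nonlinear Neveu SDE (with `r = 1`)
applied to `g_λ(u) = e^{-λu}`. -/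
theorem generator_exp_lower_bound (β θ : ℝ) (hβ : 0 ≤ β) (hθ : 0 ≤ θ)
    (lam u : ℝ) (hlam : 0 < lam) (hu : 0 < u) :
    u ^ β * lam ^ 2 *
        (∫ z in (0:ℝ)..1, ∫ v in (0:ℝ)..1, Real.exp (-(lam * (u + z * v))) * (1 - v))
      + u ^ θ *
        (∫ z in Set.Ioi (1:ℝ),
          (Real.exp (-(lam * (u + z))) - Real.exp (-(lam * u))) * z ^ (-2 : ℝ))
      ≥ Real.exp (-(lam * u)) *
          (2⁻¹ * u ^ β * lam * (1 - Real.exp (-(lam / 2))) - u ^ θ) := by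
  have hup : (0:ℝ) < u ^ β := Real.rpow_pos_of_pos hu β
  have hut : (0:ℝ) < u ^ θ := Real.rpow_pos_of_pos hu θ
  -- Step A: inner integral lower bound for z ∈ [0,1]
  have hinner : ∀ z ∈ Set.Icc (0:ℝ) 1,
      Real.exp (-(lam * (u + z))) * 2⁻¹
        ≤ ∫ v in (0:ℝ)..1, Real.exp (-(lam * (u + z * v))) * (1 - v) := by
    intro z hz
    have h1v : (∫ v in (0:ℝ)..1, (1 - v)) = 2⁻¹ := by
      rw [intervalIntegral.integral_sub intervalIntegrable_const
        (intervalIntegral.intervalIntegrable_id)]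
      simp [integral_id]
      norm_num
    have h1 : (∫ v in (0:ℝ)..1, Real.exp (-(lam * (u + z))) * (1 - v))
        = Real.exp (-(lam * (u + z))) * 2⁻¹ := by
      rw [intervalIntegral.integral_const_mul, h1v]
    rw [← h1]
    apply intervalIntegral.integral_mono_on zero_le_one
    · exact ((by fun_prop : Continuous fun v : ℝ =>
        Real.exp (-(lam * (u + z))) * (1 - v))).intervalIntegrable 0 1
    · exact ((by fun_prop : Continuous fun v : ℝ =>
        Real.exp (-(lam * (u + z * v))) * (1 - v))).intervalIntegrable 0 1
    · intro v hv
      have h2 : lam * (u + z * v) ≤ lam * (u + z) := by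
        have : z * v ≤ z := by nlinarith [hz.1, hz.2, hv.1, hv.2]
        nlinarith
      have h3 : Real.exp (-(lam * (u + z))) ≤ Real.exp (-(lam * (u + z * v))) :=
        Real.exp_le_exp.2 (by linarith)
      exact mul_le_mul_of_nonneg_right h3 (by linarith [hv.2])
  -- Step B: outer integral lower bound
  have hcont : Continuous (fun z : ℝ =>
      ∫ v in (0:ℝ)..1, Real.exp (-(lam * (u + z * v))) * (1 - v)) := by
    apply intervalIntegral.continuous_parametric_intervalIntegral_of_continuous'
      (f := fun (z : ℝ) (v : ℝ) => Real.exp (-(lam * (u + z * v))) * (1 - v))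
    exact (by fun_prop : Continuous fun p : ℝ × ℝ =>
      Real.exp (-(lam * (u + p.1 * p.2))) * (1 - p.2))
  have hexp_int : (∫ z in (0:ℝ)..1, Real.exp (-(lam * (u + z))))
      = (Real.exp (-(lam * u)) - Real.exp (-(lam * (u + 1)))) / lam := by
    have hderiv : ∀ z ∈ Set.uIcc (0:ℝ) 1, HasDerivAt
        (fun z : ℝ => -Real.exp (-(lam * (u + z))) / lam)
        (Real.exp (-(lam * (u + z)))) z := by
      intro z _
      have h1 : HasDerivAt (fun z : ℝ => -(lam * (u + z))) (-lam) z := by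
        have : HasDerivAt (fun z : ℝ => u + z) 1 z :=
          (hasDerivAt_id z).const_add u
        have h := (this.const_mul lam).neg; rw [mul_one] at h; exact h
      have h2 := h1.exp
      have h3 := (h2.neg).div_const lam
      refine h3.congr_deriv ?_
      field_simp [hlam.ne']
    rw [intervalIntegral.integral_eq_sub_of_hasDerivAt hderiv
      (((by fun_prop : Continuous fun z : ℝ =>
        Real.exp (-(lam * (u + z))))).intervalIntegrable 0 1)]
    simp only [add_zero]
    ring
  have houter : 2⁻¹ * ((Real.exp (-(lam * u)) - Real.exp (-(lam * (u + 1)))) / lam)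
      ≤ ∫ z in (0:ℝ)..1, ∫ v in (0:ℝ)..1, Real.exp (-(lam * (u + z * v))) * (1 - v) := by
    have h1 : (∫ z in (0:ℝ)..1, Real.exp (-(lam * (u + z))) * 2⁻¹)
        = 2⁻¹ * ((Real.exp (-(lam * u)) - Real.exp (-(lam * (u + 1)))) / lam) := by
      rw [intervalIntegral.integral_mul_const, hexp_int]; ring
    rw [← h1]
    apply intervalIntegral.integral_mono_on zero_le_one
    · exact ((by fun_prop : Continuous fun z : ℝ =>
        Real.exp (-(lam * (u + z))) * 2⁻¹)).intervalIntegrable 0 1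
    · exact hcont.intervalIntegrable _ _
    · intro z hz; exact hinner z hz
  -- Step C: tail integral lower bound
  have hrpow_int : IntegrableOn (fun z : ℝ => z ^ (-2 : ℝ)) (Set.Ioi 1) :=
    integrableOn_Ioi_rpow_of_lt (by norm_num) one_pos
  have hrpow_val : (∫ z in Set.Ioi (1:ℝ), z ^ (-2 : ℝ)) = 1 := by
    rw [integral_Ioi_rpow_of_lt (by norm_num) one_pos]
    norm_num
  have hf_int : IntegrableOn (fun z : ℝ =>
      (Real.exp (-(lam * (u + z))) - Real.exp (-(lam * u))) * z ^ (-2 : ℝ))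
      (Set.Ioi 1) := by
    apply Integrable.mono' (g := fun z : ℝ => Real.exp (-(lam * u)) * z ^ (-2 : ℝ))
      (hrpow_int.const_mul _)
    · apply ContinuousOn.aestronglyMeasurable _ measurableSet_Ioi
      apply ContinuousOn.mul (by fun_prop)
      intro z hz
      exact (Real.continuousAt_rpow_const z (-2) (Or.inl (by
        simp only [Set.mem_Ioi] at hz; linarith))).continuousWithinAt
    · filter_upwards [ae_restrict_mem measurableSet_Ioi] with z hz
      simp only [Set.mem_Ioi] at hz
      have hz0 : (0:ℝ) < z := by linarith
      have hzp : (0:ℝ) ≤ z ^ (-2 : ℝ) := Real.rpow_nonneg hz0.le _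
      rw [norm_mul, Real.norm_eq_abs, Real.norm_eq_abs, abs_of_nonneg hzp]
      apply mul_le_mul_of_nonneg_right _ hzp
      rw [abs_le]
      constructor
      · have : (0:ℝ) < Real.exp (-(lam * (u + z))) := Real.exp_pos _
        have : (0:ℝ) < Real.exp (-(lam * u)) := Real.exp_pos _
        nlinarith [Real.exp_pos (-(lam * (u + z)))]
      · have h1 : Real.exp (-(lam * (u + z))) ≤ Real.exp (-(lam * u)) :=
          Real.exp_le_exp.2 (by nlinarith)
        nlinarith [Real.exp_pos (-(lam * u)), Real.exp_pos (-(lam * (u + z)))]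
  have htail : -Real.exp (-(lam * u))
      ≤ ∫ z in Set.Ioi (1:ℝ),
          (Real.exp (-(lam * (u + z))) - Real.exp (-(lam * u))) * z ^ (-2 : ℝ) := by
    have h1 : (∫ z in Set.Ioi (1:ℝ), -Real.exp (-(lam * u)) * z ^ (-2 : ℝ))
        = -Real.exp (-(lam * u)) := by
      rw [MeasureTheory.integral_const_mul, hrpow_val, mul_one]
    rw [← h1]
    apply MeasureTheory.setIntegral_mono_on (hrpow_int.const_mul _) hf_int
      measurableSet_Ioi
    intro z hz
    simp only [Set.mem_Ioi] at hz
    have hz0 : (0:ℝ) < z := by linarith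
    have hzp : (0:ℝ) ≤ z ^ (-2 : ℝ) := Real.rpow_nonneg hz0.le _
    apply mul_le_mul_of_nonneg_right _ hzp
    have := Real.exp_pos (-(lam * (u + z)))
    linarith
  -- Combine
  have key1 : u ^ β * lam ^ 2 *
      (2⁻¹ * ((Real.exp (-(lam * u)) - Real.exp (-(lam * (u + 1)))) / lam))
      ≤ u ^ β * lam ^ 2 *
        (∫ z in (0:ℝ)..1, ∫ v in (0:ℝ)..1, Real.exp (-(lam * (u + z * v))) * (1 - v)) :=
    mul_le_mul_of_nonneg_left houter (by positivity)
  have key2 : u ^ θ * (-Real.exp (-(lam * u)))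
      ≤ u ^ θ *
        (∫ z in Set.Ioi (1:ℝ),
          (Real.exp (-(lam * (u + z))) - Real.exp (-(lam * u))) * z ^ (-2 : ℝ)) :=
    mul_le_mul_of_nonneg_left htail hut.le
  rw [ge_iff_le]
  have hexp_split : Real.exp (-(lam * (u + 1))) = Real.exp (-(lam * u)) * Real.exp (-lam) := by
    rw [← Real.exp_add]; ring_nf
  have hhalf : Real.exp (-lam) ≤ Real.exp (-(lam / 2)) :=
    Real.exp_le_exp.2 (by linarith)
  have hhalf1 : Real.exp (-(lam / 2)) ≤ 1 := Real.exp_le_one_iff.2 (by linarith)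
  have heu : (0:ℝ) < Real.exp (-(lam * u)) := Real.exp_pos _
  have final : Real.exp (-(lam * u)) * (2⁻¹ * u ^ β * lam * (1 - Real.exp (-(lam / 2))) - u ^ θ)
      ≤ u ^ β * lam ^ 2 *
          (2⁻¹ * ((Real.exp (-(lam * u)) - Real.exp (-(lam * (u + 1)))) / lam))
        + u ^ θ * (-Real.exp (-(lam * u))) := by
    rw [hexp_split]
    have hcalc : u ^ β * lam ^ 2 *
        (2⁻¹ * ((Real.exp (-(lam * u)) - Real.exp (-(lam * u)) * Real.exp (-lam)) / lam))
        = Real.exp (-(lam * u)) * (2⁻¹ * u ^ β * lam * (1 - Real.exp (-lam))) := by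
      field_simp
    rw [hcalc]
    have : Real.exp (-(lam * u)) * (2⁻¹ * u ^ β * lam * (1 - Real.exp (-(lam / 2))))
        ≤ Real.exp (-(lam * u)) * (2⁻¹ * u ^ β * lam * (1 - Real.exp (-lam))) := by
      apply mul_le_mul_of_nonneg_left _ heu.le
      apply mul_le_mul_of_nonneg_left _ (by positivity)
      linarith
    nlinarith
  linarith
end

section
/- For every ρ > 0, the limit as u → 0⁺ of (∫_u^∞ [1 - (1+z)^{-ρ}]·z^{-2} dz) / (ρ·ln(1/u)) equals 1. -/
open MeasureTheory Real Filter Set Topology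

lemma aux_bounds (ρ : ℝ) (hρ : 0 < ρ) {z : ℝ} (hz : 0 < z) :
    ρ * z - ρ * (1 + ρ) * z ^ 2 ≤ 1 - (1 + z) ^ (-ρ) ∧ 1 - (1 + z) ^ (-ρ) ≤ ρ * z := by
  have h1z : (0:ℝ) < 1 + z := by linarith
  set L := Real.log (1 + z) with hLdef
  have ht : (1 + z) ^ (-ρ) = Real.exp (-(ρ * L)) := by
    rw [Real.rpow_def_of_pos h1z, hLdef]; ring_nf
  have hLz : L ≤ z := by
    have := Real.log_le_sub_one_of_pos h1z; linarith
  have hLz2 : z / (1 + z) ≤ L := by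
    have h := Real.log_le_sub_one_of_pos (x := (1 + z)⁻¹) (by positivity)
    rw [Real.log_inv] at h
    have heq : z / (1 + z) = 1 - (1 + z)⁻¹ := by field_simp; ring
    rw [heq, hLdef]; linarith
  set t := Real.exp (-(ρ * L)) with htdef
  have htpos : 0 < t := Real.exp_pos _
  have h1 : 1 - t ≤ ρ * L := by
    have := Real.add_one_le_exp (-(ρ * L)); rw [← htdef] at this; linarith
  have h3 : ρ * L * t ≤ 1 - t := by
    have h := Real.add_one_le_exp (ρ * L)
    have hinv : Real.exp (ρ * L) = t⁻¹ := by rw [htdef, ← Real.exp_neg, neg_neg]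
    rw [hinv] at h
    have := mul_le_mul_of_nonneg_right h htpos.le
    rw [add_mul, inv_mul_cancel₀ htpos.ne'] at this
    linarith
  have hLnn : 0 ≤ L := by
    have : 0 ≤ z / (1 + z) := by positivity
    linarith
  rw [ht]
  constructor
  · -- lower bound
    have htlb : 1 - ρ * z ≤ t := by nlinarith
    have hz' : z ≤ L * (1 + z) := by
      rw [div_le_iff₀ h1z] at hLz2; linarith
    have h5 : (ρ * t) * z ≤ (ρ * t) * (L * (1 + z)) :=
      mul_le_mul_of_nonneg_left hz' (mul_nonneg hρ.le htpos.le)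
    have h6 := mul_le_mul_of_nonneg_right h3 h1z.le
    have hA : ρ * z * t ≤ (1 - t) * (1 + z) := by nlinarith [h5, h6]
    have h7 : ρ * z * (1 - ρ * z) ≤ ρ * z * t :=
      mul_le_mul_of_nonneg_left htlb (mul_nonneg hρ.le hz.le)
    nlinarith [hA, h7, mul_pos (mul_pos hρ hz) (mul_pos hz hz), h1z]
  · nlinarith


lemma integrable_aux (ρ : ℝ) (hρ : 0 < ρ) {u : ℝ} (hu : 0 < u) :
    IntegrableOn (fun z : ℝ => (1 - (1 + z) ^ (-ρ)) * z ^ (-2 : ℝ)) (Ioi u) := by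
  have hc : ContinuousOn (fun z : ℝ => (1 - (1 + z) ^ (-ρ)) * z ^ (-2 : ℝ)) (Ioi u) := by
    apply ContinuousOn.mul
    · exact continuousOn_const.sub <|
        ((continuous_const.add continuous_id).continuousOn).rpow_const
          (fun z hz => Or.inl (by simp only [mem_Ioi] at hz; have h : (0:ℝ) < 1 + z := (by linarith); simpa using h.ne'))
    · exact continuousOn_id.rpow_const
        (fun z hz => Or.inl (ne_of_gt (lt_trans hu hz)))
  apply Integrable.mono' (integrableOn_Ioi_rpow_of_lt (by norm_num : (-2:ℝ) < -1) hu)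
  · exact hc.aestronglyMeasurable measurableSet_Ioi
  · filter_upwards [ae_restrict_mem measurableSet_Ioi] with z hz
    simp only [mem_Ioi] at hz
    have hz0 : 0 < z := lt_trans hu hz
    have h1z : (0:ℝ) < 1 + z := by linarith
    have ht0 : 0 ≤ (1 + z) ^ (-ρ) := Real.rpow_nonneg h1z.le _
    have ht1 : (1 + z) ^ (-ρ) ≤ 1 :=
      Real.rpow_le_one_of_one_le_of_nonpos (by linarith) (by linarith)
    rw [norm_mul, Real.norm_eq_abs (z ^ (-2:ℝ)), abs_of_nonneg (Real.rpow_nonneg hz0.le _), Real.norm_eq_abs]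
    have : |1 - (1 + z) ^ (-ρ)| ≤ 1 := by rw [abs_of_nonneg (by linarith)]; linarith
    calc |1 - (1 + z) ^ (-ρ)| * z ^ (-2:ℝ)
        ≤ 1 * z ^ (-2:ℝ) := by
          apply mul_le_mul_of_nonneg_right this (Real.rpow_nonneg hz0.le _)
      _ = z ^ (-2:ℝ) := one_mul _

lemma main_est (ρ : ℝ) (hρ : 0 < ρ) {u : ℝ} (hu : 0 < u) (hu1 : u < 1) :
    |(∫ z in Ioi u, (1 - (1 + z) ^ (-ρ)) * z ^ (-2 : ℝ)) - ρ * Real.log (1 / u)|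
      ≤ ρ * (1 + ρ) + |∫ z in Ioi (1:ℝ), (1 - (1 + z) ^ (-ρ)) * z ^ (-2 : ℝ)| := by
  set f : ℝ → ℝ := fun z => (1 - (1 + z) ^ (-ρ)) * z ^ (-2 : ℝ) with hf
  have hint : IntegrableOn f (Ioi u) := integrable_aux ρ hρ hu
  have hint1 : IntegrableOn f (Ioi 1) := integrable_aux ρ hρ one_pos
  have hintIoc : IntegrableOn f (Ioc u 1) := hint.mono_set Ioc_subset_Ioi_self
  have hsplit : ∫ z in Ioi u, f z = (∫ z in Ioc u 1, f z) + ∫ z in Ioi 1, f z := by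
    rw [← setIntegral_union (Ioc_disjoint_Ioi le_rfl) measurableSet_Ioi hintIoc hint1,
      Ioc_union_Ioi_eq_Ioi hu1.le]
  have hIoc : ∫ z in Ioc u 1, f z = ∫ z in u..1, f z :=
    (intervalIntegral.integral_of_le hu1.le).symm
  have hfI : IntervalIntegrable f volume u 1 :=
    (intervalIntegrable_iff_integrableOn_Ioc_of_le hu1.le).mpr hintIoc
  have hg : IntervalIntegrable (fun z : ℝ => ρ * z⁻¹) volume u 1 := by
    apply ContinuousOn.intervalIntegrable
    apply continuousOn_const.mul
    apply ContinuousOn.inv₀ continuousOn_id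
    intro z hz
    rw [uIcc_of_le hu1.le] at hz
    exact ne_of_gt (lt_of_lt_of_le hu hz.1)
  have hdiff : ∫ z in u..1, f z = (∫ z in u..1, ρ * z⁻¹) + ∫ z in u..1, (f z - ρ * z⁻¹) := by
    rw [intervalIntegral.integral_sub hfI hg]; ring
  have hlog : (∫ z in u..1, ρ * z⁻¹) = ρ * Real.log (1 / u) := by
    rw [intervalIntegral.integral_const_mul, integral_inv_of_pos hu one_pos]
  have herr : |∫ z in u..1, (f z - ρ * z⁻¹)| ≤ ρ * (1 + ρ) := by
    have hb : ∀ z ∈ Set.uIoc u 1, ‖f z - ρ * z⁻¹‖ ≤ ρ * (1 + ρ) := by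
      intro z hz
      rw [uIoc_of_le hu1.le] at hz
      have hz0 : 0 < z := lt_trans hu hz.1
      have hz2 : z ^ (-2 : ℝ) = (z ^ 2)⁻¹ := by
        rw [Real.rpow_neg hz0.le, Real.rpow_two]
      obtain ⟨hlow, hup⟩ := aux_bounds ρ hρ hz0
      have heq : f z - ρ * z⁻¹ = ((1 - (1 + z) ^ (-ρ)) - ρ * z) * (z ^ 2)⁻¹ := by
        rw [hf]; simp only; rw [hz2]; field_simp
      rw [heq, Real.norm_eq_abs, abs_mul, abs_of_nonneg (by positivity : (0:ℝ) ≤ (z ^ 2)⁻¹)]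
      have habs : |(1 - (1 + z) ^ (-ρ)) - ρ * z| ≤ ρ * (1 + ρ) * z ^ 2 := by
        rw [abs_le]; constructor <;> nlinarith [sq_nonneg z]
      calc |(1 - (1 + z) ^ (-ρ)) - ρ * z| * (z ^ 2)⁻¹
          ≤ ρ * (1 + ρ) * z ^ 2 * (z ^ 2)⁻¹ := by
            apply mul_le_mul_of_nonneg_right habs (by positivity)
        _ = ρ * (1 + ρ) := by field_simp
    have h := intervalIntegral.norm_integral_le_of_norm_le_const hb
    rw [Real.norm_eq_abs] at h
    have : |1 - u| ≤ 1 := by rw [abs_of_nonneg (by linarith)]; linarith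
    calc |∫ z in u..1, (f z - ρ * z⁻¹)| ≤ ρ * (1 + ρ) * |1 - u| := h
      _ ≤ ρ * (1 + ρ) * 1 := by
          apply mul_le_mul_of_nonneg_left this (by positivity)
      _ = ρ * (1 + ρ) := mul_one _
  rw [hsplit, hIoc, hdiff, hlog]
  have : ρ * Real.log (1 / u) + (∫ z in u..1, (f z - ρ * z⁻¹)) + (∫ z in Ioi 1, f z)
      - ρ * Real.log (1 / u) = (∫ z in u..1, (f z - ρ * z⁻¹)) + ∫ z in Ioi 1, f z := by ring
  rw [this]
  calc |(∫ z in u..1, (f z - ρ * z⁻¹)) + ∫ z in Ioi 1, f z|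
      ≤ |∫ z in u..1, (f z - ρ * z⁻¹)| + |∫ z in Ioi 1, f z| := abs_add_le _ _
    _ ≤ ρ * (1 + ρ) + |∫ z in Ioi 1, f z| := by linarith

/-- For `ρ > 0`, `lim_{u → 0⁺} (∫_u^∞ [1-(1+z)^{-ρ}] z^{-2} dz)/(ρ ln(1/u)) = 1`. -/
theorem rpow_integral_asymptotic (ρ : ℝ) (hρ : 0 < ρ) :
    Filter.Tendsto
      (fun u : ℝ =>
        (∫ z in Set.Ioi u, (1 - (1 + z) ^ (-ρ)) * z ^ (-2 : ℝ)) / (ρ * Real.log (1 / u)))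
      (nhdsWithin 0 (Set.Ioi 0)) (nhds 1) := by
  set f : ℝ → ℝ := fun z => (1 - (1 + z) ^ (-ρ)) * z ^ (-2 : ℝ) with hf
  set C : ℝ := ρ * (1 + ρ) + |∫ z in Set.Ioi (1:ℝ), f z| with hC
  set D : ℝ → ℝ := fun u => ρ * Real.log (1 / u) with hD
  have hDtop : Tendsto D (𝓝[>] (0:ℝ)) atTop := by
    apply Tendsto.const_mul_atTop hρ
    have h1 : Tendsto (fun u : ℝ => -Real.log u) (𝓝[>] (0:ℝ)) atTop :=
      tendsto_neg_atBot_atTop.comp tendsto_log_nhdsGT_zero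
    refine h1.congr (fun u => ?_)
    rw [one_div, Real.log_inv]
  have hev : ∀ᶠ u in 𝓝[>] (0:ℝ), |(∫ z in Set.Ioi u, f z) / D u - 1| ≤ C / D u := by
    filter_upwards [Ioo_mem_nhdsGT one_pos] with u hu
    have hu0 : 0 < u := hu.1
    have hD0 : 0 < D u := by
      apply mul_pos hρ (Real.log_pos ?_)
      rw [lt_div_iff₀ hu0]; linarith [hu.2]
    have key := main_est ρ hρ hu0 hu.2
    rw [div_sub_one (ne_of_gt hD0), abs_div, abs_of_pos hD0]
    exact (div_le_div_iff_of_pos_right hD0).mpr key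
  have hCD : Tendsto (fun u => C / D u) (𝓝[>] (0:ℝ)) (𝓝 0) :=
    tendsto_const_nhds.div_atTop hDtop
  have h0 : Tendsto (fun u => |(∫ z in Set.Ioi u, f z) / D u - 1|) (𝓝[>] (0:ℝ)) (𝓝 0) :=
    squeeze_zero' (Eventually.of_forall fun u => abs_nonneg _) hev hCD
  have h1 : Tendsto (fun u => (∫ z in Set.Ioi u, f z) / D u - 1) (𝓝[>] (0:ℝ)) (𝓝 0) :=
    (tendsto_zero_iff_abs_tendsto_zero _).mpr h0
  have h2 := h1.add (tendsto_const_nhds : Tendsto (fun _ : ℝ => (1:ℝ)) (𝓝[>] (0:ℝ)) (𝓝 1))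
  simp only [zero_add] at h2
  exact h2.congr (fun u => by ring)
end

section
/- Let n ≥ 1 and define g_n(u) = ln(ln(6n/u)) for 0 < u ≤ 2n. Then for all 0 < u ≤ n and 0 ≤ z ≤ 1, g_n(u + u·z) - g_n(u) - u·z·g_n'(u) ≤ z² / ln 3, where g_n'(u) = -1/(u·ln(6n/u)). -/
open Real

/-- Taylor-remainder upper bound for `g_n(u) = ln ln (6n/u)`:
for `0 < u ≤ n` and `0 ≤ z ≤ 1`,
`g_n(u + uz) - g_n(u) - uz·g_n'(u) ≤ z²/ln 3`. -/
theorem loglog_small_jump_bound (n : ℝ) (hn : 1 ≤ n) (u z : ℝ)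
    (hu0 : 0 < u) (hun : u ≤ n) (hz0 : 0 ≤ z) (hz1 : z ≤ 1) :
    Real.log (Real.log (6 * n / (u + u * z)))
      - Real.log (Real.log (6 * n / u))
      - u * z * (-(1 / (u * Real.log (6 * n / u))))
      ≤ z ^ 2 / Real.log 3 := by
  have hz : (0:ℝ) < 1 + z := by linarith
  have h6pos : (0:ℝ) < 6 * n / u := by positivity
  have h6 : (6:ℝ) ≤ 6 * n / u := by
    rw [le_div_iff₀ hu0]; nlinarith
  set L := Real.log (6 * n / u) with hLdef
  have hL3 : Real.log 3 ≤ L := Real.log_le_log (by norm_num) (by linarith)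
  have h3pos : (0:ℝ) < Real.log 3 := Real.log_pos (by norm_num)
  have hL0 : 0 < L := lt_of_lt_of_le h3pos hL3
  set t := Real.log (1 + z) with htdef
  have ht0 : 0 ≤ t := Real.log_nonneg (by linarith)
  have ht2 : t ≤ Real.log 2 := Real.log_le_log (by linarith) (by linarith)
  have hlog23 : Real.log 2 < Real.log 3 := by
    apply Real.log_lt_log <;> norm_num
  have hpos : 0 < L - t := by linarith
  have harg : 6 * n / (u + u * z) = (6 * n / u) / (1 + z) := by
    field_simp
  have hlog1 : Real.log (6 * n / (u + u * z)) = L - t := by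
    rw [harg, Real.log_div (ne_of_gt h6pos) (ne_of_gt hz)]
  have hterm : u * z * (-(1 / (u * L))) = -(z / L) := by
    field_simp
  rw [hlog1, hterm]
  -- log(L - t) - log L ≤ -t/L
  have hdiff : Real.log (L - t) - Real.log L ≤ -t / L := by
    rw [← Real.log_div (ne_of_gt hpos) (ne_of_gt hL0)]
    have := Real.log_le_sub_one_of_pos (show 0 < (L - t) / L by positivity)
    have h1 : (L - t) / L - 1 = -t / L := by field_simp; ring
    linarith [h1 ▸ this]
  -- z - t ≤ z^2
  have hzt : z - t ≤ z ^ 2 := by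
    have hlb : 1 - (1 + z)⁻¹ ≤ t := Real.one_sub_inv_le_log_of_pos hz
    have h2 : 1 - (1 + z)⁻¹ = z / (1 + z) := by field_simp; ring
    have h3 : z - z / (1 + z) = z ^ 2 / (1 + z) := by field_simp; ring
    have h4 : z ^ 2 / (1 + z) ≤ z ^ 2 := by
      apply div_le_self (by positivity) (by linarith)
    linarith [h2 ▸ hlb, h3]
  have hfinal : (z - t) / L ≤ z ^ 2 / Real.log 3 := by
    calc (z - t) / L ≤ z ^ 2 / L := by gcongr
      _ ≤ z ^ 2 / Real.log 3 := by gcongr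
  have : Real.log (L - t) - Real.log L - -(z / L) ≤ (z - t) / L := by
    have : -t / L + z / L = (z - t) / L := by ring
    linarith [hdiff]
  linarith
end

section
/- Let n ≥ 1 and g_n(u) = ln(ln(6n/u)) for 0 < u ≤ 2n. Then for all 0 < u ≤ 1, ∫₁^{1/u} [g_n(u + u·z) - g_n(u) - u·z·g_n'(u)]·z^{-2} dz ≤ ln(1/u)/ln(6n/u) ≤ 1. -/
open MeasureTheory intervalIntegral Real

/-- For `g_n(u) = ln ln(6n/u)` and `0 < u ≤ 1`,
`∫₁^{1/u} [g_n(u+uz) - g_n(u) - uz g_n'(u)] z^{-2} dz ≤ ln(1/u)/ln(6n/u) ≤ 1`. -/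
theorem loglog_medium_jump_bound (n : ℝ) (hn : 1 ≤ n) (u : ℝ)
    (hu0 : 0 < u) (hu1 : u ≤ 1) :
    (∫ z in (1:ℝ)..(1 / u),
        (Real.log (Real.log (6 * n / (u + u * z)))
          - Real.log (Real.log (6 * n / u))
          - u * z * (-(1 / (u * Real.log (6 * n / u))))) * z ^ (-2 : ℝ))
      ≤ Real.log (1 / u) / Real.log (6 * n / u)
    ∧ Real.log (1 / u) / Real.log (6 * n / u) ≤ 1 := by
  have h6 : (0:ℝ) < 6 * n := by linarith
  have hq : (6:ℝ) ≤ 6 * n / u := by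
    rw [le_div_iff₀ hu0]; nlinarith
  have hL1 : (1:ℝ) < Real.log (6 * n / u) := by
    have h1 : (1:ℝ) < Real.log 6 := by
      rw [Real.lt_log_iff_exp_lt (by norm_num)]
      have := Real.exp_one_lt_d9
      linarith
    have h2 : Real.log 6 ≤ Real.log (6 * n / u) :=
      Real.log_le_log (by norm_num) hq
    linarith
  have hL0 : (0:ℝ) < Real.log (6 * n / u) := by linarith
  have h1u : (1:ℝ) ≤ 1 / u := by
    rw [le_div_iff₀ hu0]; linarith
  constructor
  · -- main inequality
    set L := Real.log (6 * n / u) with hLdef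
    set f : ℝ → ℝ := fun z =>
        (Real.log (Real.log (6 * n / (u + u * z)))
          - Real.log (Real.log (6 * n / u))
          - u * z * (-(1 / (u * L)))) * z ^ (-2 : ℝ) with hfdef
    set g : ℝ → ℝ := fun z => (1 / L) * z⁻¹ with hgdef
    have hpt : ∀ z ∈ Set.Icc (1:ℝ) (1 / u), f z ≤ g z := by
      intro z hz
      obtain ⟨hz1, hz2⟩ := hz
      have hz0 : (0:ℝ) < z := by linarith
      have huz0 : (0:ℝ) < u + u * z := by nlinarith
      have huz2 : u + u * z ≤ 2 := by
        have : u * z ≤ 1 := by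
          calc u * z ≤ u * (1 / u) := by nlinarith
          _ = 1 := by field_simp
        linarith
      have harg1 : (1:ℝ) < 6 * n / (u + u * z) := by
        rw [lt_div_iff₀ huz0]; nlinarith
      have hAB : Real.log (Real.log (6 * n / (u + u * z)))
          ≤ Real.log (Real.log (6 * n / u)) := by
        have hin : Real.log (6 * n / (u + u * z)) ≤ Real.log (6 * n / u) := by
          apply Real.log_le_log (by linarith)
          apply div_le_div_of_nonneg_left (le_of_lt h6) hu0
          nlinarith
        exact Real.log_le_log (Real.log_pos harg1) hin
      have hlin : u * z * (-(1 / (u * L))) = -(z / L) := by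
        field_simp
      have hpow : z ^ (-2 : ℝ) = (z * z)⁻¹ := by
        rw [show (-2 : ℝ) = -(2:ℕ) by norm_num, Real.rpow_neg (le_of_lt hz0),
          Real.rpow_natCast]
        ring_nf
      have hpos : (0:ℝ) ≤ z ^ (-2 : ℝ) := Real.rpow_nonneg (le_of_lt hz0) _
      have h1 : f z ≤ (z / L) * z ^ (-2 : ℝ) := by
        simp only [hfdef, hlin]
        apply mul_le_mul_of_nonneg_right _ hpos
        linarith
      have h2 : (z / L) * z ^ (-2 : ℝ) = g z := by
        rw [hpow, hgdef]
        field_simp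
      linarith [h1, h2 ▸ h1]
    have hfc : ContinuousOn f (Set.Icc (1:ℝ) (1 / u)) := by
      apply ContinuousOn.mul
      · apply ContinuousOn.sub
        apply ContinuousOn.sub
        · apply ContinuousOn.log
          · apply ContinuousOn.log
            · apply ContinuousOn.div continuousOn_const
              · exact (continuousOn_const.add (continuousOn_const.mul continuousOn_id))
              · intro z hz
                have : (0:ℝ) < u + u * z := by
                  obtain ⟨hz1, _⟩ := hz; nlinarith
                exact ne_of_gt this
            · intro z hz
              obtain ⟨hz1, _⟩ := hz
              have huz0 : (0:ℝ) < u + u * z := by nlinarith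
              positivity
          · intro z hz
            obtain ⟨hz1, hz2⟩ := hz
            have huz0 : (0:ℝ) < u + u * z := by nlinarith
            have harg1 : (1:ℝ) < 6 * n / (u + u * z) := by
              rw [lt_div_iff₀ huz0]
              have : u * z ≤ 1 := by
                calc u * z ≤ u * (1 / u) := by nlinarith
                _ = 1 := by field_simp
              nlinarith
            exact ne_of_gt (Real.log_pos harg1)
        · exact continuousOn_const
        · exact (continuousOn_const.mul continuousOn_id).mul continuousOn_const
      · apply ContinuousOn.rpow_const continuousOn_id
        intro z hz
        left
        obtain ⟨hz1, _⟩ := hz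
        exact ne_of_gt (by linarith : (0:ℝ) < z)
    have hgc : ContinuousOn g (Set.Icc (1:ℝ) (1 / u)) := by
      apply continuousOn_const.mul
      apply ContinuousOn.inv₀ continuousOn_id
      intro z hz
      obtain ⟨hz1, _⟩ := hz
      exact ne_of_gt (by linarith : (0:ℝ) < z)
    have hfi : IntervalIntegrable f volume 1 (1 / u) :=
      (hfc.mono (by rw [Set.uIcc_of_le h1u])).intervalIntegrable
    have hgi : IntervalIntegrable g volume 1 (1 / u) :=
      (hgc.mono (by rw [Set.uIcc_of_le h1u])).intervalIntegrable
    have hmono := intervalIntegral.integral_mono_on h1u hfi hgi hpt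
    have hgval : (∫ z in (1:ℝ)..(1 / u), g z) = Real.log (1 / u) / L := by
      rw [hgdef]
      rw [intervalIntegral.integral_const_mul]
      rw [integral_inv]
      · rw [div_one]; ring
      · intro h
        rw [Set.uIcc_of_le h1u] at h
        obtain ⟨h1, _⟩ := h
        linarith
    calc (∫ z in (1:ℝ)..(1 / u), f z) ≤ ∫ z in (1:ℝ)..(1 / u), g z := hmono
      _ = Real.log (1 / u) / L := hgval
  · rw [div_le_one hL0]
    apply Real.log_le_log (by positivity)
    exact (div_le_div_iff_of_pos_right hu0).mpr (by linarith)
end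

section
/- Let n ≥ 1 and define g_n(u) = ln(ln(6n·u)) for u ≥ 1/n. Then for all u ≥ 1/n and 0 < z ≤ 1, g_n(u + u·z) - g_n(u) - u·z·g_n'(u) ≤ -z²/(8·ln(12·n·u)), where g_n'(u) = 1/(u·ln(6n·u)). -/
open Real

/-- For `g_n(u) = ln ln(6nu)` with `u ≥ 1/n` and `0 < z ≤ 1`,
`g_n(u+uz) - g_n(u) - uz g_n'(u) ≤ -z²/(8 ln(12nu))`. -/
theorem loglog_explosion_small_jump_bound (n : ℝ) (hn : 1 ≤ n) (u z : ℝ)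
    (hu : 1 / n ≤ u) (hz0 : 0 < z) (hz1 : z ≤ 1) :
    Real.log (Real.log (6 * n * (u + u * z)))
      - Real.log (Real.log (6 * n * u))
      - u * z * (1 / (u * Real.log (6 * n * u)))
      ≤ -(z ^ 2) / (8 * Real.log (12 * n * u)) := by
  have hn0 : (0:ℝ) < n := lt_of_lt_of_le one_pos hn
  have hu0 : 0 < u := lt_of_lt_of_le (by positivity) hu
  have hnu : 1 ≤ n * u := by
    have := (div_le_iff₀ hn0).mp hu
    linarith [this]
  set L := Real.log (6 * n * u) with hLdef
  have hL6 : Real.log 6 ≤ L := Real.log_le_log (by norm_num) (by nlinarith)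
  have hL0 : 0 < L := Real.log_pos (by nlinarith)
  have hlog2 : (0:ℝ) < Real.log 2 := Real.log_pos (by norm_num)
  have h2L : Real.log 2 ≤ L := le_trans (Real.log_le_log (by norm_num) (by norm_num)) hL6
  set s := Real.log (1 + z) with hsdef
  have hs0 : 0 ≤ s := Real.log_nonneg (by linarith)
  -- split the log
  have hsplit : Real.log (6 * n * (u + u * z)) = L + s := by
    have h1 : 6 * n * (u + u * z) = (6 * n * u) * (1 + z) := by ring
    rw [h1, Real.log_mul (by positivity) (by positivity)]
  -- s ≤ z - z^2/4
  have hsz : s ≤ z - z ^ 2 / 4 := by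
    have ht : 0 ≤ z - z ^ 2 / 4 := by nlinarith
    have hexp : 1 + z ≤ Real.exp (z - z ^ 2 / 4) := by
      have := Real.quadratic_le_exp_of_nonneg ht
      nlinarith [sq_nonneg z, sq_nonneg (z - z^2/4)]
    calc s ≤ Real.log (Real.exp (z - z ^ 2 / 4)) :=
          Real.log_le_log (by linarith) hexp
      _ = z - z ^ 2 / 4 := Real.log_exp _
  -- outer log bound
  have hLs : 0 < L + s := by linarith
  have houter : Real.log (L + s) - Real.log L ≤ s / L := by
    have h := Real.log_le_sub_one_of_pos (x := (L + s) / L) (by positivity)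
    rw [Real.log_div (ne_of_gt hLs) (ne_of_gt hL0)] at h
    have hfs : (L + s) / L - 1 = s / L := by field_simp; ring
    linarith [hfs ▸ h]
  -- simplify the derivative term
  have hderiv : u * z * (1 / (u * L)) = z / L := by
    field_simp
  -- log(12 n u) = log 2 + L
  have h12 : Real.log (12 * n * u) = Real.log 2 + L := by
    have h1 : 12 * n * u = 2 * (6 * n * u) := by ring
    rw [h1, Real.log_mul (by norm_num) (by positivity)]
  have hM0 : 0 < Real.log (12 * n * u) := by rw [h12]; linarith
  -- main chain
  have hmain : Real.log (L + s) - Real.log L - z / L ≤ -(z ^ 2) / (4 * L) := by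
    have h1 : s / L - z / L ≤ -(z ^ 2) / (4 * L) := by
      rw [div_sub_div_same, div_le_div_iff₀ hL0 (by positivity)]
      nlinarith [sq_nonneg z]
    linarith
  have hfinal : -(z ^ 2) / (4 * L) ≤ -(z ^ 2) / (8 * Real.log (12 * n * u)) := by
    rw [neg_div, neg_div, neg_le_neg_iff, div_le_div_iff₀ (by positivity) (by positivity)]
    rw [h12]
    nlinarith [sq_nonneg z]
  rw [hsplit, hderiv]
  linarith
end

section
/- For every θ > 1, setting ρ = θ - 1 and g(u) = 1 - u^{-ρ}, there exists u₀ > 1 and d > 0 such that for all u ≥ u₀: -ρ(ρ+1)·u^β·∫₀¹∫₀¹ (u+v·z)^{-ρ-2}(1-v) dv dz + u^θ·∫₁^∞ [u^{-ρ} - (u+z)^{-ρ}]·z^{-2} dz ≥ d·g(u), provided β ≤ θ + 1. -/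
open MeasureTheory intervalIntegral Real

lemma convexOn_rpow_neg_aux {ρ : ℝ} (hρ : 0 < ρ) :
    ConvexOn ℝ (Set.Ici (1:ℝ)) (fun x : ℝ => x ^ (-ρ)) := by
  apply convexOn_of_hasDerivWithinAt2_nonneg (f' := fun x => -ρ * x ^ (-ρ - 1))
    (f'' := fun x => -ρ * ((-ρ - 1) * x ^ (-ρ - 1 - 1))) (convex_Ici 1)
  · exact continuousOn_id.rpow_const fun x hx =>
      Or.inl (ne_of_gt (lt_of_lt_of_le one_pos hx))
  · intro x hx
    rw [interior_Ici] at hx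
    have hx0 : x ≠ 0 := ne_of_gt (lt_trans one_pos hx)
    exact (Real.hasDerivAt_rpow_const (p := -ρ) (Or.inl hx0)).hasDerivWithinAt
  · intro x hx
    rw [interior_Ici] at hx
    have hx0 : x ≠ 0 := ne_of_gt (lt_trans one_pos hx)
    exact ((Real.hasDerivAt_rpow_const (p := -ρ - 1) (Or.inl hx0)).const_mul
      (-ρ)).hasDerivWithinAt
  · intro x hx
    rw [interior_Ici] at hx
    have hx0 : (0:ℝ) ≤ x := le_of_lt (lt_trans one_pos hx)
    have h1 : (0:ℝ) ≤ x ^ (-ρ - 1 - 1) := Real.rpow_nonneg hx0 _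
    have h2 : -ρ * ((-ρ - 1) * x ^ (-ρ - 1 - 1)) = ρ * (ρ + 1) * x ^ (-ρ - 1 - 1) := by ring
    rw [h2]
    positivity

lemma chord_aux {ρ : ℝ} (hρ : 0 < ρ) {s : ℝ} (h0 : 0 ≤ s) (h1 : s ≤ 1) :
    (1 + s) ^ (-ρ) ≤ 1 - (1 - (2:ℝ) ^ (-ρ)) * s := by
  have h := (convexOn_rpow_neg_aux hρ).2 (Set.self_mem_Ici)
    (show (2:ℝ) ∈ Set.Ici (1:ℝ) by norm_num) (sub_nonneg.2 h1) h0 (by ring)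
  simp only [smul_eq_mul] at h
  rw [show (1 - s) * (1:ℝ) + s * 2 = 1 + s by ring, Real.one_rpow] at h
  linarith

/-- For `θ > 1`, `0 ≤ β ≤ θ+1`, with `ρ = θ-1` and `g(u) = 1 - u^{-ρ}`, there
exist `u₀ > 1` and `d > 0` such that `L g(u) ≥ d·g(u)` for all `u ≥ u₀`. -/
theorem explosion_drift_lower_bound (θ β : ℝ) (hθ : 1 < θ) (hβ0 : 0 ≤ β)
    (hβ : β ≤ θ + 1) :
    ∃ u₀ : ℝ, 1 < u₀ ∧ ∃ d : ℝ, 0 < d ∧ ∀ u : ℝ, u₀ ≤ u →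
      -((θ - 1) * ((θ - 1) + 1)) * u ^ β *
          (∫ z in (0:ℝ)..1, ∫ v in (0:ℝ)..1, (u + v * z) ^ (-(θ - 1) - 2) * (1 - v))
        + u ^ θ *
          (∫ z in Set.Ioi (1:ℝ), (u ^ (-(θ - 1)) - (u + z) ^ (-(θ - 1))) * z ^ (-2 : ℝ))
        ≥ d * (1 - u ^ (-(θ - 1))) := by
  set ρ := θ - 1 with hρdef
  have hρ : 0 < ρ := by simp only [hρdef]; linarith
  have hc : 0 < 1 - (2:ℝ) ^ (-ρ) := by
    have := Real.rpow_lt_one_of_one_lt_of_neg (by norm_num : (1:ℝ) < 2) (neg_neg_of_pos hρ)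
    linarith
  set c := 1 - (2:ℝ) ^ (-ρ) with hcdef
  refine ⟨max 2 (Real.exp ((ρ * (ρ + 1) + 1) / c)),
    lt_of_lt_of_le one_lt_two (le_max_left _ _), 1, one_pos, ?_⟩
  intro u hu
  have hu2 : (2:ℝ) ≤ u := le_trans (le_max_left _ _) hu
  have hu1 : (1:ℝ) < u := lt_of_lt_of_le one_lt_two hu2
  have hu0 : (0:ℝ) < u := lt_trans one_pos hu1
  -- log bound
  have hlog : ρ * (ρ + 1) + 1 ≤ c * Real.log u := by
    have h1 : (ρ * (ρ + 1) + 1) / c ≤ Real.log u :=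
      (Real.le_log_iff_exp_le hu0).2 (le_trans (le_max_right _ _) hu)
    calc ρ * (ρ + 1) + 1 = (ρ * (ρ + 1) + 1) / c * c := by field_simp
      _ ≤ Real.log u * c := mul_le_mul_of_nonneg_right h1 hc.le
      _ = c * Real.log u := mul_comm _ _
  -- Step 1 : the negative term
  set N := ∫ z in (0:ℝ)..1, ∫ v in (0:ℝ)..1, (u + v * z) ^ (-ρ - 2) * (1 - v) with hNdef
  have hN : ‖N‖ ≤ u ^ (-ρ - 2) := by
    have h := intervalIntegral.norm_integral_le_of_norm_le_const
      (C := u ^ (-ρ - 2)) (f := fun z => ∫ v in (0:ℝ)..1, (u + v * z) ^ (-ρ - 2) * (1 - v))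
      (a := 0) (b := 1) ?_
    · simpa using h
    · intro z hz
      rw [Set.uIoc_of_le (by norm_num : (0:ℝ) ≤ 1)] at hz
      have h2 := intervalIntegral.norm_integral_le_of_norm_le_const
        (C := u ^ (-ρ - 2)) (f := fun v => (u + v * z) ^ (-ρ - 2) * (1 - v))
        (a := 0) (b := 1) ?_
      · simpa using h2
      · intro v hv
        rw [Set.uIoc_of_le (by norm_num : (0:ℝ) ≤ 1)] at hv
        obtain ⟨hv1, hv2⟩ := hv
        obtain ⟨hz1, hz2⟩ := hz
        have hvz : 0 ≤ v * z := mul_nonneg hv1.le hz1.le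
        have h3 : (u + v * z) ^ (-ρ - 2) ≤ u ^ (-ρ - 2) :=
          Real.rpow_le_rpow_of_nonpos hu0 (by linarith) (by linarith)
        have h4 : (0:ℝ) ≤ (u + v * z) ^ (-ρ - 2) := Real.rpow_nonneg (by linarith) _
        rw [Real.norm_eq_abs, abs_mul, abs_of_nonneg h4, abs_of_nonneg (by linarith : (0:ℝ) ≤ 1 - v)]
        calc (u + v * z) ^ (-ρ - 2) * (1 - v) ≤ u ^ (-ρ - 2) * 1 :=
              mul_le_mul h3 (by linarith) (by linarith) (Real.rpow_nonneg hu0.le _)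
          _ = u ^ (-ρ - 2) := mul_one _
  have hstep1 : -(ρ * (ρ + 1)) * u ^ β * N ≥ -(ρ * (ρ + 1)) := by
    have hNle : N ≤ u ^ (-ρ - 2) := le_trans (le_abs_self N) (by rwa [Real.norm_eq_abs] at hN)
    have h2 : u ^ β * N ≤ u ^ β * u ^ (-ρ - 2) :=
      mul_le_mul_of_nonneg_left hNle (Real.rpow_nonneg hu0.le β)
    have h3 : u ^ β * u ^ (-ρ - 2) = u ^ (β + (-ρ - 2)) := (Real.rpow_add hu0 _ _).symm
    have h4 : u ^ (β + (-ρ - 2)) ≤ 1 :=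
      Real.rpow_le_one_of_one_le_of_nonpos hu1.le (by simp only [hρdef]; linarith)
    have h5 : u ^ β * N ≤ 1 := by rw [h3] at h2; linarith
    nlinarith [mul_nonneg hρ.le (by linarith : (0:ℝ) ≤ ρ + 1)]
  -- Step 2 : the positive term
  set f : ℝ → ℝ := fun z => (u ^ (-ρ) - (u + z) ^ (-ρ)) * z ^ (-2:ℝ) with hfdef
  have hfnonneg : ∀ z ∈ Set.Ioi (1:ℝ), 0 ≤ f z := by
    intro z hz
    have hz1 : (1:ℝ) < z := hz
    have h1 : (u + z) ^ (-ρ) ≤ u ^ (-ρ) :=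
      Real.rpow_le_rpow_of_nonpos hu0 (by linarith) (by linarith)
    exact mul_nonneg (by linarith) (Real.rpow_nonneg (by linarith) _)
  have hfmeas : ContinuousOn f (Set.Ioi 1) := by
    apply ContinuousOn.mul
    · exact continuousOn_const.sub ((continuousOn_const.add continuousOn_id).rpow_const
        fun z hz => Or.inl (by have : (1:ℝ) < z := hz; show u + z ≠ 0; exact ne_of_gt (by linarith)))
    · exact continuousOn_id.rpow_const fun z hz =>
        Or.inl (ne_of_gt (lt_trans one_pos hz))
  have hg_int : IntegrableOn (fun z => u ^ (-ρ) * z ^ (-2:ℝ)) (Set.Ioi 1) :=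
    (integrableOn_Ioi_rpow_of_lt (by norm_num) one_pos).const_mul _
  have hf_int : IntegrableOn f (Set.Ioi 1) := by
    apply Integrable.mono' hg_int (hfmeas.aestronglyMeasurable measurableSet_Ioi)
    filter_upwards [ae_restrict_mem measurableSet_Ioi] with z hz
    have hz1 : (1:ℝ) < z := hz
    have h1 : (u + z) ^ (-ρ) ≤ u ^ (-ρ) :=
      Real.rpow_le_rpow_of_nonpos hu0 (by linarith) (by linarith)
    have h2 : (0:ℝ) ≤ (u + z) ^ (-ρ) := Real.rpow_nonneg (by linarith) _
    rw [Real.norm_eq_abs, abs_of_nonneg (hfnonneg z hz)]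
    exact mul_le_mul_of_nonneg_right (by linarith) (Real.rpow_nonneg (by linarith) _)
  -- pointwise lower bound on Ioc 1 u
  have hlow : ∀ z ∈ Set.Ioc (1:ℝ) u, c * u ^ (-θ) * z⁻¹ ≤ f z := by
    intro z hz
    have hz0 : (0:ℝ) < z := lt_trans one_pos hz.1
    have hs0 : (0:ℝ) ≤ z / u := le_of_lt (div_pos hz0 hu0)
    have hs1 : z / u ≤ 1 := (div_le_one hu0).2 hz.2
    have hch := chord_aux hρ hs0 hs1
    have hsplit : (u + z) ^ (-ρ) = u ^ (-ρ) * (1 + z / u) ^ (-ρ) := by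
      rw [← Real.mul_rpow hu0.le (by positivity)]
      congr 1
      field_simp
    have hkey : u ^ (-ρ) * (c * (z / u)) ≤ u ^ (-ρ) - (u + z) ^ (-ρ) := by
      rw [hsplit]
      have := mul_le_mul_of_nonneg_left hch (Real.rpow_nonneg hu0.le (-ρ))
      nlinarith [Real.rpow_nonneg hu0.le (-ρ)]
    have hmul : u ^ (-ρ) * (c * (z / u)) * z ^ (-2:ℝ) ≤ f z :=
      mul_le_mul_of_nonneg_right hkey (Real.rpow_nonneg hz0.le _)
    have heq : u ^ (-ρ) * (c * (z / u)) * z ^ (-2:ℝ) = c * u ^ (-θ) * z⁻¹ := by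
      have hz2 : z * z ^ (-2:ℝ) = z⁻¹ := by
        rw [show (-2:ℝ) = -1 + -1 by norm_num, Real.rpow_add hz0, Real.rpow_neg_one]
        field_simp
      have hu3 : u ^ (-ρ) * u⁻¹ = u ^ (-θ) := by
        rw [← Real.rpow_neg_one u, ← Real.rpow_add hu0]
        congr 1
        simp only [hρdef]; ring
      calc u ^ (-ρ) * (c * (z / u)) * z ^ (-2:ℝ)
          = c * (u ^ (-ρ) * u⁻¹) * (z * z ^ (-2:ℝ)) := by ring
        _ = c * u ^ (-θ) * z⁻¹ := by rw [hz2, hu3]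
    rwa [heq] at hmul
  have hg2_int : IntegrableOn (fun z => c * u ^ (-θ) * z⁻¹) (Set.Ioc 1 u) := by
    apply ContinuousOn.integrableOn_Icc (a := 1) (b := u) ?_ |>.mono_set Set.Ioc_subset_Icc_self
    exact continuousOn_const.mul (continuousOn_id.inv₀ fun z hz =>
      ne_of_gt (lt_of_lt_of_le one_pos hz.1))
  have hint2 : (∫ z in Set.Ioc 1 u, c * u ^ (-θ) * z⁻¹) = c * u ^ (-θ) * Real.log u := by
    rw [← intervalIntegral.integral_of_le hu1.le, intervalIntegral.integral_const_mul,
      integral_inv_of_pos one_pos hu0, div_one]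
  have hmono1 : (∫ z in Set.Ioc 1 u, f z) ≤ ∫ z in Set.Ioi 1, f z := by
    apply setIntegral_mono_set hf_int
    · filter_upwards [ae_restrict_mem measurableSet_Ioi] with z hz using hfnonneg z hz
    · exact HasSubset.Subset.eventuallyLE Set.Ioc_subset_Ioi_self
  have hIlow : c * u ^ (-θ) * Real.log u ≤ ∫ z in Set.Ioi 1, f z := by
    calc c * u ^ (-θ) * Real.log u = ∫ z in Set.Ioc 1 u, c * u ^ (-θ) * z⁻¹ := hint2.symm
      _ ≤ ∫ z in Set.Ioc 1 u, f z :=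
          setIntegral_mono_on hg2_int (hf_int.mono_set Set.Ioc_subset_Ioi_self)
            measurableSet_Ioc hlow
      _ ≤ _ := hmono1
  have hpos : c * Real.log u ≤ u ^ θ * ∫ z in Set.Ioi 1, f z := by
    have h := mul_le_mul_of_nonneg_left hIlow (Real.rpow_nonneg hu0.le θ)
    have heq : u ^ θ * (c * u ^ (-θ) * Real.log u) = c * Real.log u := by
      rw [show u ^ θ * (c * u ^ (-θ) * Real.log u) = u ^ θ * u ^ (-θ) * (c * Real.log u) by ring,
        ← Real.rpow_add hu0]
      norm_num
    linarith
  -- conclusion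
  have hrg : (0:ℝ) ≤ u ^ (-ρ) := Real.rpow_nonneg hu0.le _
  have : -(ρ * (ρ + 1)) * u ^ β * N + u ^ θ * (∫ z in Set.Ioi (1:ℝ), f z)
      ≥ 1 * (1 - u ^ (-ρ)) := by nlinarith
  exact this
end

section
/- For all ρ > 0, β ≥ 0, θ ≥ 0 with β ≤ θ + 1, setting g(u) = u^{-ρ}, there exists c > 1 such that for all u ≥ c: ρ(ρ+1)·u^{β-1-ρ}·∫₀^{1/u}∫₀¹ (1+z·v)^{-ρ-2}(1-v) dv dz - u^{θ-1-ρ}·∫_{1/u}^∞ [1 - (1+z)^{-ρ}]·z^{-2} dz ≤ 0. -/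
open MeasureTheory intervalIntegral Real

/-- Pointwise bound: `(1+z)^(-ρ) ≤ 1 - (1 - 2^(-ρ)) * z` for `z ∈ [0,1]`. -/
lemma aux_pointwise_rpow_bound (ρ : ℝ) (hρ : 0 < ρ) {z : ℝ} (h0 : 0 ≤ z) (h1 : z ≤ 1) :
    (1 + z) ^ (-ρ) ≤ 1 - (1 - (2:ℝ) ^ (-ρ)) * z := by
  have hz1 : (0:ℝ) < 1 + z := by linarith
  -- step 1: z * log 2 ≤ log (1 + z)  (concavity of log)
  have hlog : z * Real.log 2 ≤ Real.log (1 + z) := by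
    have hc := strictConcaveOn_log_Ioi.concaveOn.2
      (show (1:ℝ) ∈ Set.Ioi (0:ℝ) by norm_num) (show (2:ℝ) ∈ Set.Ioi (0:ℝ) by norm_num)
      (show (0:ℝ) ≤ 1 - z by linarith) h0 (show (1 - z) + z = 1 by ring)
    rw [smul_eq_mul, smul_eq_mul, smul_eq_mul, smul_eq_mul,
      show (1 - z) * (1:ℝ) + z * 2 = 1 + z by ring, Real.log_one] at hc
    linarith
  -- step 2: (1+z)^(-ρ) = exp (log (1+z) * (-ρ)) ≤ exp (z * (-ρ * log 2))
  have h2 : (1 + z) ^ (-ρ) ≤ Real.exp (z * (-ρ * Real.log 2)) := by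
    rw [Real.rpow_def_of_pos hz1]
    apply Real.exp_le_exp.2
    nlinarith
  -- step 3: convexity of exp : exp (z * a) ≤ (1 - z) + z * exp a
  have h3 : Real.exp (z * (-ρ * Real.log 2)) ≤ (1 - z) + z * Real.exp (-ρ * Real.log 2) := by
    have hc := convexOn_exp.2 (Set.mem_univ (0:ℝ)) (Set.mem_univ (-ρ * Real.log 2))
      (show (0:ℝ) ≤ 1 - z by linarith) h0 (show (1 - z) + z = 1 by ring)
    rw [smul_eq_mul, smul_eq_mul, smul_eq_mul, smul_eq_mul,
      show (1 - z) * (0:ℝ) + z * (-ρ * Real.log 2) = z * (-ρ * Real.log 2) by ring,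
      Real.exp_zero, mul_one] at hc
    linarith
  have h4 : Real.exp (-ρ * Real.log 2) = (2:ℝ) ^ (-ρ) := by
    rw [Real.rpow_def_of_pos (by norm_num : (0:ℝ) < 2), mul_comm]
  calc (1 + z) ^ (-ρ) ≤ (1 - z) + z * Real.exp (-ρ * Real.log 2) := h2.trans h3
    _ = 1 - (1 - (2:ℝ) ^ (-ρ)) * z := by rw [h4]; ring

/-- Lower bound on the tail integral: `∫_{1/u}^∞ (1-(1+z)^{-ρ}) z^{-2} ≥ (1-2^{-ρ}) log u`. -/
lemma aux_tail_integral_lower (ρ : ℝ) (hρ : 0 < ρ) {u : ℝ} (hu : 2 ≤ u) :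
    (1 - (2:ℝ) ^ (-ρ)) * Real.log u
      ≤ ∫ z in Set.Ioi (1 / u), (1 - (1 + z) ^ (-ρ)) * z ^ (-2 : ℝ) := by
  have hu0 : (0:ℝ) < u := by linarith
  have hiu0 : (0:ℝ) < 1 / u := by positivity
  have hiu1 : 1 / u ≤ 1 := by
    rw [div_le_one hu0]; linarith
  set h : ℝ → ℝ := fun z => (1 - (1 + z) ^ (-ρ)) * z ^ (-2 : ℝ) with hh
  -- h is integrable on Ioi (1/u)
  have hcont : ContinuousOn h (Set.Ici (1 / u)) := by
    apply ContinuousOn.mul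
    · apply continuousOn_const.sub
      apply ContinuousOn.rpow_const (continuousOn_const.add continuousOn_id)
      intro x hx
      simp only [Set.mem_Ici] at hx
      exact Or.inl (by intro hcon; simp only [Pi.add_apply, id_eq] at hcon; nlinarith)
    · apply ContinuousOn.rpow_const continuousOn_id
      intro x hx
      simp only [Set.mem_Ici] at hx
      exact Or.inl (ne_of_gt (lt_of_lt_of_le hiu0 hx))
  have hbnd : ∀ z ∈ Set.Ioi (1 / u), ‖h z‖ ≤ z ^ (-2 : ℝ) := by
    intro z hz
    have hz0 : 0 < z := lt_trans hiu0 hz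
    have h1 : (1 + z) ^ (-ρ) ≤ 1 :=
      Real.rpow_le_one_of_one_le_of_nonpos (by linarith) (by linarith)
    have h2 : 0 ≤ (1 + z) ^ (-ρ) := Real.rpow_nonneg (by linarith) _
    have h3 : (0:ℝ) ≤ z ^ (-2:ℝ) := Real.rpow_nonneg hz0.le _
    rw [hh]
    simp only [Real.norm_eq_abs]
    rw [abs_of_nonneg (by nlinarith)]
    nlinarith
  have hint : IntegrableOn h (Set.Ioi (1 / u)) := by
    apply Integrable.mono' (integrableOn_Ioi_rpow_of_lt (a := (-2:ℝ)) (by norm_num) hiu0)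
      ((hcont.mono Set.Ioi_subset_Ici_self).aestronglyMeasurable measurableSet_Ioi)
    exact (ae_restrict_iff' measurableSet_Ioi).2 (Filter.Eventually.of_forall hbnd)
  have hnonneg : ∀ z ∈ Set.Ioi (1 / u), 0 ≤ h z := by
    intro z hz
    have hz0 : 0 < z := lt_trans hiu0 hz
    have h1 : (1 + z) ^ (-ρ) ≤ 1 :=
      Real.rpow_le_one_of_one_le_of_nonpos (by linarith) (by linarith)
    have h3 : (0:ℝ) ≤ z ^ (-2:ℝ) := Real.rpow_nonneg hz0.le _
    show 0 ≤ (1 - (1 + z) ^ (-ρ)) * z ^ (-2:ℝ)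
    nlinarith
  -- restrict to Ioc (1/u) 1
  have hmono : ∫ z in Set.Ioc (1/u) 1, h z ≤ ∫ z in Set.Ioi (1/u), h z := by
    apply setIntegral_mono_set hint
    · exact (ae_restrict_iff' measurableSet_Ioi).2 (Filter.Eventually.of_forall hnonneg)
    · exact (Filter.Eventually.of_forall (fun z hz => Set.Ioc_subset_Ioi_self hz))
  have hIoc : ∫ z in Set.Ioc (1/u) 1, h z = ∫ z in (1/u)..1, h z :=
    (intervalIntegral.integral_of_le hiu1).symm
  -- lower bound the interval integral
  set κ := 1 - (2:ℝ) ^ (-ρ) with hκ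
  have hκ0 : 0 < κ := by
    have : (2:ℝ) ^ (-ρ) < 1 :=
      Real.rpow_lt_one_of_one_lt_of_neg (by norm_num) (by linarith)
    rw [hκ]; linarith
  have hinv_int : IntervalIntegrable (fun z : ℝ => κ * z⁻¹) volume (1/u) 1 := by
    apply ContinuousOn.intervalIntegrable
    apply ContinuousOn.mul continuousOn_const
    apply ContinuousOn.inv₀ continuousOn_id
    intro x hx
    rw [Set.uIcc_of_le hiu1] at hx
    exact ne_of_gt (lt_of_lt_of_le hiu0 hx.1)
  have hh_int : IntervalIntegrable h volume (1/u) 1 := by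
    rw [intervalIntegrable_iff_integrableOn_Ioc_of_le hiu1]
    exact hint.mono_set Set.Ioc_subset_Ioi_self
  have hptw : ∀ z ∈ Set.Icc (1/u) 1, κ * z⁻¹ ≤ h z := by
    intro z hz
    have hz0 : 0 < z := lt_of_lt_of_le hiu0 hz.1
    have haux := aux_pointwise_rpow_bound ρ hρ hz0.le hz.2
    have hz2 : z ^ (-2:ℝ) = z⁻¹ * z⁻¹ := by
      rw [show (-2:ℝ) = (-1) + (-1) by norm_num, Real.rpow_add hz0,
        Real.rpow_neg_one]
    have : κ * z⁻¹ = (κ * z) * z ^ (-2:ℝ) := by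
      rw [hz2]; field_simp
    rw [this]
    show κ * z * z ^ (-2:ℝ) ≤ (1 - (1 + z) ^ (-ρ)) * z ^ (-2:ℝ)
    apply mul_le_mul_of_nonneg_right _ (Real.rpow_nonneg hz0.le _)
    rw [hκ]; nlinarith
  have hlow : κ * Real.log u ≤ ∫ z in (1/u)..1, h z := by
    have hmo := intervalIntegral.integral_mono_on hiu1 hinv_int hh_int hptw
    have heq : ∫ z in (1/u)..1, κ * z⁻¹ = κ * Real.log u := by
      rw [intervalIntegral.integral_const_mul, integral_inv]
      · rw [one_div_one_div]
      · rw [Set.uIcc_of_le hiu1]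
        intro hx
        exact absurd hx.1 (by linarith)
    rw [heq] at hmo
    exact hmo
  calc κ * Real.log u ≤ ∫ z in (1/u)..1, h z := hlow
    _ = ∫ z in Set.Ioc (1/u) 1, h z := hIoc.symm
    _ ≤ ∫ z in Set.Ioi (1/u), h z := hmono

/-- Upper bound on the double integral: at most `1/(2u)`. -/
lemma aux_double_integral_upper (ρ : ℝ) (hρ : 0 < ρ) {u : ℝ} (hu : 2 ≤ u) :
    (∫ z in (0:ℝ)..(1 / u), ∫ v in (0:ℝ)..1, (1 + z * v) ^ (-ρ - 2) * (1 - v))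
      ≤ 1 / (2 * u) := by
  have hu0 : (0:ℝ) < u := by linarith
  have hiu0 : (0:ℝ) ≤ 1 / u := by positivity
  set F : ℝ → ℝ := fun z => ∫ v in (0:ℝ)..1, (1 + z * v) ^ (-ρ - 2) * (1 - v) with hF
  have hFle : ∀ z : ℝ, 0 ≤ z → F z ≤ 1 / 2 := by
    intro z hz
    have hcont : ContinuousOn (fun v : ℝ => (1 + z * v) ^ (-ρ - 2) * (1 - v))
        (Set.Icc 0 1) := by
      apply ContinuousOn.mul
      · apply ContinuousOn.rpow_const
          (continuousOn_const.add (continuousOn_const.mul continuousOn_id))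
        intro x hx
        exact Or.inl (ne_of_gt (show (0:ℝ) < 1 + z * x by have := hx.1; have := hx.2; nlinarith [mul_nonneg hz hx.1]))
      · exact continuousOn_const.sub continuousOn_id
    have hint1 : IntervalIntegrable (fun v : ℝ => (1 + z * v) ^ (-ρ - 2) * (1 - v))
        volume 0 1 := by
      apply ContinuousOn.intervalIntegrable
      rwa [Set.uIcc_of_le (by norm_num : (0:ℝ) ≤ 1)]
    have hint2 : IntervalIntegrable (fun v : ℝ => 1 - v) volume 0 1 :=
      (continuous_const.sub continuous_id).intervalIntegrable 0 1
    have hmono := intervalIntegral.integral_mono_on (by norm_num : (0:ℝ) ≤ 1)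
      hint1 hint2 (fun v hv => by
        have h1 : (1 + z * v) ^ (-ρ - 2) ≤ 1 :=
          Real.rpow_le_one_of_one_le_of_nonpos
            (by nlinarith [hv.1, hv.2]) (by linarith)
        have h2 : (0:ℝ) ≤ 1 - v := by linarith [hv.2]
        nlinarith)
    have hval : ∫ v in (0:ℝ)..1, (1 - v) = 1 / 2 := by
      rw [intervalIntegral.integral_sub intervalIntegrable_const intervalIntegrable_id]
      simp
      norm_num
    rw [hF]
    calc (∫ v in (0:ℝ)..1, (1 + z * v) ^ (-ρ - 2) * (1 - v))
        ≤ ∫ v in (0:ℝ)..1, (1 - v) := hmono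
      _ = 1 / 2 := hval
  by_cases hFi : IntervalIntegrable F volume 0 (1/u)
  · have := intervalIntegral.integral_mono_on hiu0 hFi
      (_root_.intervalIntegrable_const (c := (1:ℝ)/2)) (fun z hz => hFle z hz.1)
    simp only [intervalIntegral.integral_const, smul_eq_mul, sub_zero] at this
    calc (∫ z in (0:ℝ)..(1/u), F z) ≤ 1 / u * (1 / 2) := this
      _ = 1 / (2 * u) := by field_simp
  · rw [intervalIntegral.integral_undef hFi]
    positivity

/-- For `ρ > 0`, `β, θ ≥ 0` with `β ≤ θ+1` and `g(u) = u^{-ρ}`, there exists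
`c > 1` such that `L g(u) ≤ 0` for all `u ≥ c`. -/
theorem staying_infinite_drift_bound (ρ β θ : ℝ) (hρ : 0 < ρ)
    (hβ : 0 ≤ β) (hθ : 0 ≤ θ) (hβθ : β ≤ θ + 1) :
    ∃ c : ℝ, 1 < c ∧ ∀ u : ℝ, c ≤ u →
      ρ * (ρ + 1) * u ^ (β - 1 - ρ) *
          (∫ z in (0:ℝ)..(1 / u), ∫ v in (0:ℝ)..1, (1 + z * v) ^ (-ρ - 2) * (1 - v))
        - u ^ (θ - 1 - ρ) *
          (∫ z in Set.Ioi (1 / u), (1 - (1 + z) ^ (-ρ)) * z ^ (-2 : ℝ))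
        ≤ 0 := by
  set κ := 1 - (2:ℝ) ^ (-ρ) with hκ
  have hκ0 : 0 < κ := by
    have : (2:ℝ) ^ (-ρ) < 1 :=
      Real.rpow_lt_one_of_one_lt_of_neg (by norm_num) (by linarith)
    rw [hκ]; linarith
  refine ⟨max 2 (Real.exp (ρ * (ρ + 1) / 2 / κ)), lt_of_lt_of_le one_lt_two (le_max_left _ _),
    fun u hu => ?_⟩
  have hu2 : (2:ℝ) ≤ u := le_trans (le_max_left _ _) hu
  have hu0 : (0:ℝ) < u := by linarith
  have hu1 : (1:ℝ) ≤ u := by linarith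
  have hlogu : ρ * (ρ + 1) / 2 / κ ≤ Real.log u := by
    have h1 : Real.exp (ρ * (ρ + 1) / 2 / κ) ≤ u := le_trans (le_max_right _ _) hu
    calc ρ * (ρ + 1) / 2 / κ = Real.log (Real.exp (ρ * (ρ + 1) / 2 / κ)) :=
          (Real.log_exp _).symm
      _ ≤ Real.log u := Real.log_le_log (Real.exp_pos _) h1
  have hκlog : ρ * (ρ + 1) / 2 ≤ κ * Real.log u := by
    rw [div_le_iff₀ hκ0] at hlogu
    linarith [hlogu]
  -- bound the first term
  have hA := aux_double_integral_upper ρ hρ hu2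
  have hB := aux_tail_integral_lower ρ hρ hu2
  have hpow_pos : (0:ℝ) < u ^ (β - 1 - ρ) := Real.rpow_pos_of_pos hu0 _
  have hpow_pos2 : (0:ℝ) < u ^ (θ - 1 - ρ) := Real.rpow_pos_of_pos hu0 _
  have hT1 : ρ * (ρ + 1) * u ^ (β - 1 - ρ) *
      (∫ z in (0:ℝ)..(1 / u), ∫ v in (0:ℝ)..1, (1 + z * v) ^ (-ρ - 2) * (1 - v))
      ≤ ρ * (ρ + 1) / 2 * u ^ (β - 2 - ρ) := by
    have hc : 0 ≤ ρ * (ρ + 1) * u ^ (β - 1 - ρ) := by positivity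
    have hm := mul_le_mul_of_nonneg_left hA hc
    have heq : ρ * (ρ + 1) * u ^ (β - 1 - ρ) * (1 / (2 * u))
        = ρ * (ρ + 1) / 2 * u ^ (β - 2 - ρ) := by
      rw [show β - 2 - ρ = (β - 1 - ρ) + (-1) by ring, Real.rpow_add hu0,
        Real.rpow_neg_one]
      field_simp
      all_goals ring
    rw [heq] at hm
    exact hm
  have hT1' : ρ * (ρ + 1) / 2 * u ^ (β - 2 - ρ) ≤ ρ * (ρ + 1) / 2 * u ^ (θ - 1 - ρ) := by
    apply mul_le_mul_of_nonneg_left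
      (Real.rpow_le_rpow_of_exponent_le hu1 (by linarith)) (by positivity)
  have hT2 : u ^ (θ - 1 - ρ) * (κ * Real.log u)
      ≤ u ^ (θ - 1 - ρ) *
        (∫ z in Set.Ioi (1 / u), (1 - (1 + z) ^ (-ρ)) * z ^ (-2 : ℝ)) :=
    mul_le_mul_of_nonneg_left hB hpow_pos2.le
  have hfinal : ρ * (ρ + 1) / 2 * u ^ (θ - 1 - ρ) ≤ u ^ (θ - 1 - ρ) * (κ * Real.log u) := by
    rw [mul_comm (ρ * (ρ + 1) / 2)]
    exact mul_le_mul_of_nonneg_left hκlog hpow_pos2.le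
  linarith
end
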